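/- Let D be a chain decomposition of a connected undirected graph G. An edge e of G is a bridge if and only if e is not contained in any chain of D. -/

import Mathlib

variable {V : Type*} [Fintype V] [DecidableEq V]

/-- Follow tree edges (parent pointers) towards the root, starting at `w`, stopping at
the first vertex that is already visited, or at the root.  The first argument is fuel. -/
def towardRoot (parent : V → V) (root : V) (visited : Finset V) : ℕ → V → List V
  | 0, w => [w]
  | n + 1, w =>
      if w ∈ visited ∨ w = root then [w]
      else w :: towardRoot parent root visited n (parent w)

/-- Schmidt's chain construction: process the back edges in order; the back edge `(v, w)`
(oriented away from the root, so `v` is an ancestor of `w`) generates the chain starting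
at `v`, following the back edge to `w` and then tree edges towards the root, stopping at
the first already-visited vertex (or the root); all vertices encountered are marked
visited. -/
def runChains (parent : V → V) (root : V) : List (V × V) → Finset V → List (List V)
  | [], _ => []
  | (v, w) :: rest, visited =>
      let c := v :: towardRoot parent root (insert v visited) (Fintype.card V) w
      c :: runChains parent root rest (visited ∪ c.toFinset)

/-- A DFS tree of a graph `G`, rooted at `root`, given by parent pointers, together with
discovery times `dfi` and the list of back edges `(v, w)` (with the ancestor `v` first,
i.e. oriented away from the root), listed in increasing order of the discovery time of
their origin, as in Schmidt's chain decomposition. -/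
structure SchmidtDFS (G : SimpleGraph V) where
  root : V
  parent : V → V
  dfi : V → ℕ
  backEdges : List (V × V)
  parent_root : parent root = root
  parent_adj : ∀ v, v ≠ root → G.Adj v (parent v)
  reaches_root : ∀ v, ∃ k, parent^[k] v = root
  dfi_inj : Function.Injective dfi
  dfi_parent : ∀ v, v ≠ root → dfi (parent v) < dfi v
  /-- every back edge is an edge of `G` joining a vertex `w` to a proper ancestor `v`
  which is not its parent (so it is not a tree edge) -/
  backEdges_spec : ∀ p ∈ backEdges, G.Adj p.1 p.2 ∧ p.1 ≠ parent p.2 ∧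
      ∃ k, 2 ≤ k ∧ parent^[k] p.2 = p.1
  /-- every non-tree edge of `G` appears among the back edges -/
  backEdges_complete : ∀ u v, G.Adj u v → u ≠ parent v → v ≠ parent u →
      (u, v) ∈ backEdges ∨ (v, u) ∈ backEdges
  backEdges_nodup : (backEdges.map fun p => s(p.1, p.2)).Nodup
  /-- back edges are processed in increasing order of the discovery time of their origin -/
  backEdges_sorted : backEdges.Pairwise fun p q => dfi p.1 ≤ dfi q.1

/-- The chain decomposition determined by a DFS structure: initially no vertex is
visited, and back edges are processed in order. -/
def SchmidtDFS.chains {G : SimpleGraph V} (D : SchmidtDFS G) : List (List V) :=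
  runChains D.parent D.root D.backEdges ∅

/-- The edges of a chain (given as the list of its vertices in order). -/
def chainEdges (c : List V) : List (Sym2 V) :=
  List.zipWith (fun a b => s(a, b)) c c.tail

/-- A chain is a cycle if it has at least two vertices and ends where it starts. -/
def IsCycleChain (c : List V) : Prop := 2 ≤ c.length ∧ c.head? = c.getLast?


/-!
Every chain lies on the fundamental cycle of its back edge `(a, b)`, formed by the back edge and
the tree path from `b` up to `a`; so deleting a chain edge leaves its endpoints connected.

Conversely, a back edge lies in the chain it generates. If a tree edge `(v, parent v)` is not a
bridge, a path from `v` to its parent avoiding it leaves the subtree of `v` through a back edge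
`(a, b)` with `b` below `v` and `a` strictly above `v`. Since back edges are processed in
increasing order of the discovery time of their origin, a visited vertex with an unvisited
parent is never deeper than an origin still to be processed (`VisitInvariant`). Hence either an
earlier chain has already passed through `v` and its parent, or `v` is still unvisited when
`(a, b)` is processed and the walk up from `b` traverses `(v, parent v)`.
-/

structure IsRankedTree {α : Type*} (p : α → α) (r : α) (dfi : α → ℕ) : Prop where
  parent_root : p r = r
  dfi_parent_lt : ∀ v, v ≠ r → dfi (p v) < dfi v

namespace IsRankedTree

variable {α : Type*} {p : α → α} {r : α} {dfi : α → ℕ}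

theorem iterate_root (hT : IsRankedTree p r dfi) (n : ℕ) : p^[n] r = r :=
  Function.iterate_fixed hT.parent_root n

theorem dfi_iterate_succ_lt (hT : IsRankedTree p r dfi) {x : α} (hx : x ≠ r) (n : ℕ) :
    dfi (p^[n + 1] x) < dfi x := by
  induction n generalizing x with
  | zero => exact hT.dfi_parent_lt x hx
  | succ n ih =>
    rw [Function.iterate_succ_apply]
    by_cases hpx : p x = r
    · rw [hpx, hT.iterate_root, ← hpx]
      exact hT.dfi_parent_lt x hx
    · exact (ih hpx).trans (hT.dfi_parent_lt x hx)

theorem iterate_ne_self (hT : IsRankedTree p r dfi) {x : α} (hx : x ≠ r) {n : ℕ}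
    (hn : n ≠ 0) : p^[n] x ≠ x := by
  obtain ⟨n, rfl⟩ := Nat.exists_eq_succ_of_ne_zero hn
  exact fun h => (hT.dfi_iterate_succ_lt hx n).ne (congrArg dfi h)

theorem eq_of_iterate_eq (hT : IsRankedTree p r dfi) {x : α} {i j : ℕ} (hx : p^[i] x ≠ r)
    (h : p^[i] x = p^[j] x) : i = j := by
  rcases lt_trichotomy i j with hij | hij | hij
  · refine absurd ?_ (hT.iterate_ne_self hx (Nat.sub_ne_zero_of_lt hij))
    rw [← Function.iterate_add_apply, Nat.sub_add_cancel hij.le, h]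
  · exact hij
  · have hjr : p^[j] x ≠ r := fun hj => hx <| by
      rw [← Nat.sub_add_cancel hij.le, Function.iterate_add_apply, hj, hT.iterate_root]
    refine absurd ?_ (hT.iterate_ne_self hjr (Nat.sub_ne_zero_of_lt hij))
    rw [← Function.iterate_add_apply, Nat.sub_add_cancel hij.le, h]

theorem exists_iterate_eq_root (hT : IsRankedTree p r dfi) (x : α) : ∃ n, p^[n] x = r := by
  induction hx : dfi x using Nat.strong_induction_on generalizing x with
  | _ n ih =>
    by_cases hxr : x = r
    · exact ⟨0, hxr⟩
    · obtain ⟨k, hk⟩ := ih _ (hx ▸ hT.dfi_parent_lt x hxr) (p x) rfl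
      exact ⟨k + 1, hk⟩

theorem treeEdge_inj (hT : IsRankedTree p r dfi) {x : α} {i j : ℕ} (hx : p^[i] x ≠ r)
    (h : s(p^[j] x, p^[j + 1] x) = s(p^[i] x, p^[i + 1] x)) : j = i := by
  rcases Sym2.eq_iff.mp h with ⟨hji, -⟩ | ⟨hji, hij⟩
  · exact (hT.eq_of_iterate_eq hx hji.symm).symm
  · have : p^[i] x = p^[i + 2] x := by
      rw [Function.iterate_succ_apply', ← hji, ← Function.iterate_succ_apply' p, hij]
    exact absurd (hT.eq_of_iterate_eq hx this) (by omega)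

theorem backEdge_ne_treeEdge (hT : IsRankedTree p r dfi) {a b : α} (hab : a ≠ p b) {i : ℕ}
    (hi : p^[i] b ≠ r) : s(a, b) ≠ s(p^[i] b, p^[i + 1] b) := by
  have hb : p^[0] b ≠ r := fun hb => hi <| by rw [show b = r from hb, hT.iterate_root]
  intro h
  rcases Sym2.eq_iff.mp h with ⟨-, hb'⟩ | ⟨ha, hb'⟩
  · exact absurd (hT.eq_of_iterate_eq (i := 0) hb hb') (by omega)
  · obtain rfl := hT.eq_of_iterate_eq (i := 0) hb hb'
    exact hab ha

end IsRankedTree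

section TreePaths

variable {α : Type*} {p : α → α} {r : α} {dfi : α → ℕ} {G : SimpleGraph α}

theorem reachable_iterate_of_treeEdge_ne (hpr : p r = r) (hadj : ∀ v, v ≠ r → G.Adj v (p v))
    {e : Sym2 α} {x : α} {i k : ℕ} (hik : i ≤ k)
    (he : ∀ j, i ≤ j → j < k → p^[j] x ≠ r → s(p^[j] x, p^[j + 1] x) ≠ e) :
    (G.deleteEdges {e}).Reachable (p^[i] x) (p^[k] x) := by
  induction k, hik using Nat.le_induction with
  | base => exact .refl _
  | succ k hik ih =>
    refine (ih fun j hij hjk => he j hij (by omega)).trans ?_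
    by_cases hr : p^[k] x = r
    · rw [Function.iterate_succ_apply', hr, hpr]
    · refine (SimpleGraph.deleteEdges_adj.mpr ⟨?_, he k hik k.lt_succ_self hr⟩).reachable
      rw [Function.iterate_succ_apply']
      exact hadj _ hr

namespace IsRankedTree

variable (hT : IsRankedTree p r dfi) (hadj : ∀ v, v ≠ r → G.Adj v (p v))
include hT hadj

theorem reachable_deleteEdges_backEdge {a b : α} (hpb : a ≠ p b) {m : ℕ}
    (hm : p^[m] b = a) : (G.deleteEdges {s(a, b)}).Reachable a b := by
  have h := reachable_iterate_of_treeEdge_ne (x := b) hT.parent_root hadj (Nat.zero_le m)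
    fun j _ _ hj => (hT.backEdge_ne_treeEdge hpb hj).symm
  rw [hm] at h
  exact h.symm

theorem reachable_deleteEdges_treeEdge {a b : α} (hab : G.Adj a b) (hpb : a ≠ p b) {m i : ℕ}
    (hm : p^[m] b = a) (hi : i < m) :
    (G.deleteEdges {s(p^[i] b, p^[i + 1] b)}).Reachable (p^[i] b) (p^[i + 1] b) := by
  by_cases hr : p^[i] b = r
  · rw [Function.iterate_succ_apply', hr, hT.parent_root]
  have up := reachable_iterate_of_treeEdge_ne hT.parent_root hadj hi
    fun j hij _ _ h => absurd (hT.treeEdge_inj hr h) (by omega)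
  have back : (G.deleteEdges {s(p^[i] b, p^[i + 1] b)}).Adj a b :=
    SimpleGraph.deleteEdges_adj.mpr ⟨hab, hT.backEdge_ne_treeEdge hpb hr⟩
  have down := reachable_iterate_of_treeEdge_ne hT.parent_root hadj (Nat.zero_le i)
    fun j _ hji _ h => absurd (hT.treeEdge_inj hr h) (by omega)
  rw [hm] at up
  exact (down.symm.trans back.reachable.symm).trans up.symm

end IsRankedTree

end TreePaths

section Chains

variable {α : Type*}

theorem chainEdges_cons_map_range (a : α) (f : ℕ → α) (k : ℕ) :
    chainEdges (a :: (List.range (k + 1)).map f) =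
      s(a, f 0) :: (List.range k).map fun i => s(f i, f (i + 1)) := by
  induction k generalizing a f with
  | zero => rfl
  | succ k ih =>
    rw [List.range_succ_eq_map, List.map_cons, List.map_map,
      show chainEdges (a :: f 0 :: _) = s(a, f 0) :: chainEdges (f 0 :: _) from rfl, ih]
    simp [List.range_succ_eq_map, Function.comp_def]

theorem towardRoot_eq_map_range [DecidableEq α] (p : α → α) (r : α) (vis : Finset α)
    {k n : ℕ} {w : α} (hkn : k ≤ n) (hmin : ∀ j < k, p^[j] w ∉ vis ∧ p^[j] w ≠ r)
    (hk : p^[k] w ∈ vis ∨ p^[k] w = r) :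
    towardRoot p r vis n w = (List.range (k + 1)).map (p^[·] w) := by
  induction k generalizing n w with
  | zero =>
    cases n with
    | zero => rfl
    | succ n => rw [towardRoot, if_pos (show w ∈ vis ∨ w = r from hk)]; rfl
  | succ k ih =>
    obtain ⟨n, rfl⟩ : ∃ n', n = n' + 1 := ⟨n - 1, by omega⟩
    rw [towardRoot, if_neg (show ¬(w ∈ vis ∨ w = r) from not_or.mpr (hmin 0 k.succ_pos)),
      ih (w := p w) (by omega) (fun j hj => hmin (j + 1) (by omega)) hk,
      List.range_succ_eq_map (n := k + 1)]
    simp [Function.comp_def, Function.iterate_succ_apply]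

end Chains

def backEdgeChain (p : V → V) (r : V) (vis : Finset V) (a b : V) : List V :=
  a :: towardRoot p r (insert a vis) (Fintype.card V) b

theorem runChains_cons (p : V → V) (r : V) (a b : V) (rest : List (V × V)) (vis : Finset V) :
    runChains p r ((a, b) :: rest) vis = backEdgeChain p r vis a b ::
      runChains p r rest (vis ∪ (backEdgeChain p r vis a b).toFinset) := rfl

theorem backEdge_mem_chainEdges_backEdgeChain (p : V → V) (r : V) (vis : Finset V) (a b : V) :
    s(a, b) ∈ chainEdges (backEdgeChain p r vis a b) := by
  unfold backEdgeChain
  cases Fintype.card V with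
  | zero => exact List.mem_cons_self
  | succ n => rw [towardRoot]; split <;> exact List.mem_cons_self

theorem exists_backEdge_mem_runChains (p : V → V) (r : V) {L : List (V × V)} {vis : Finset V}
    {a b : V} (hab : (a, b) ∈ L) : ∃ c ∈ runChains p r L vis, s(a, b) ∈ chainEdges c := by
  induction L generalizing vis with
  | nil => exact absurd hab List.not_mem_nil
  | cons q rest ih =>
    obtain ⟨a', b'⟩ := q
    rw [runChains_cons]
    rcases List.mem_cons.mp hab with heq | hab
    · obtain ⟨rfl, rfl⟩ := Prod.mk.inj heq
      exact ⟨_, List.mem_cons_self, backEdge_mem_chainEdges_backEdgeChain p r vis a b⟩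
    · obtain ⟨c, hc, hec⟩ := ih hab
      exact ⟨c, List.mem_cons_of_mem _ hc, hec⟩

namespace IsRankedTree

variable {p : V → V} {r : V} {dfi : V → ℕ}

theorem exists_towardRoot_eq (hT : IsRankedTree p r dfi) (vis : Finset V) (w : V) :
    ∃ k, (p^[k] w ∈ vis ∨ p^[k] w = r) ∧ (∀ j < k, p^[j] w ∉ vis ∧ p^[j] w ≠ r) ∧
      towardRoot p r vis (Fintype.card V) w = (List.range (k + 1)).map (p^[·] w) := by
  have hex : ∃ k, p^[k] w ∈ vis ∨ p^[k] w = r :=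
    (hT.exists_iterate_eq_root w).imp fun _ => Or.inr
  have hmin : ∀ j < Nat.find hex, p^[j] w ∉ vis ∧ p^[j] w ≠ r :=
    fun j hj => not_or.mp (Nat.find_min hex hj)
  have hinj : Function.Injective fun j : Fin (Nat.find hex) => p^[j] w :=
    fun i j hij => Fin.ext (hT.eq_of_iterate_eq (hmin i i.2).2 hij)
  have hcard : Nat.find hex ≤ Fintype.card V := by
    simpa using Fintype.card_le_of_injective _ hinj
  exact ⟨_, Nat.find_spec hex, hmin,
    towardRoot_eq_map_range p r vis hcard hmin (Nat.find_spec hex)⟩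

theorem mem_chainEdges_backEdgeChain (hT : IsRankedTree p r dfi) {vis : Finset V} {a b : V}
    {m : ℕ} (hm : p^[m] b = a) {e : Sym2 V} (he : e ∈ chainEdges (backEdgeChain p r vis a b)) :
    e = s(a, b) ∨ ∃ i < m, e = s(p^[i] b, p^[i + 1] b) := by
  obtain ⟨k, -, hmin, hk⟩ := hT.exists_towardRoot_eq (insert a vis) b
  rw [backEdgeChain, hk, chainEdges_cons_map_range] at he
  rcases List.mem_cons.mp he with rfl | he
  · exact Or.inl rfl
  obtain ⟨i, hi, rfl⟩ := List.mem_map.mp he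
  have hkm : k ≤ m := by
    by_contra! hmk
    exact (hmin m hmk).1 (hm ▸ Finset.mem_insert_self a vis)
  exact Or.inr ⟨i, by have := List.mem_range.mp hi; omega, rfl⟩

theorem treeEdge_mem_chainEdges_backEdgeChain (hT : IsRankedTree p r dfi) {vis : Finset V}
    {a b : V} {i : ℕ} (h : ∀ j ≤ i, p^[j] b ∉ insert a vis ∧ p^[j] b ≠ r) :
    s(p^[i] b, p^[i + 1] b) ∈ chainEdges (backEdgeChain p r vis a b) := by
  obtain ⟨k, hk, -, heq⟩ := hT.exists_towardRoot_eq (insert a vis) b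
  have hik : i < k := by
    by_contra! hki
    exact hk.elim (h k hki).1 (h k hki).2
  rw [backEdgeChain, heq, chainEdges_cons_map_range]
  exact List.mem_cons_of_mem _ (List.mem_map.mpr ⟨i, List.mem_range.mpr hik, rfl⟩)

theorem mem_backEdgeChain (hT : IsRankedTree p r dfi) {vis : Finset V} {a b x : V}
    (hx : x ∈ backEdgeChain p r vis a b) :
    x = a ∨ x ∈ vis ∨ x = r ∨
      s(x, p x) ∈ chainEdges (backEdgeChain p r vis a b) ∧
        p x ∈ backEdgeChain p r vis a b := by
  obtain ⟨k, hk, -, heq⟩ := hT.exists_towardRoot_eq (insert a vis) b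
  rw [backEdgeChain, heq] at hx ⊢
  rcases List.mem_cons.mp hx with rfl | hx
  · exact Or.inl rfl
  obtain ⟨j, hj, rfl⟩ := List.mem_map.mp hx
  rcases (Nat.lt_succ_iff.mp (List.mem_range.mp hj)).lt_or_eq with hjk | rfl
  · refine Or.inr (Or.inr (Or.inr ⟨?_, ?_⟩))
    · rw [chainEdges_cons_map_range, ← Function.iterate_succ_apply' p]
      exact List.mem_cons_of_mem _ (List.mem_map.mpr ⟨j, List.mem_range.mpr hjk, rfl⟩)
    · rw [← Function.iterate_succ_apply' p]
      exact List.mem_cons_of_mem _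
        (List.mem_map.mpr ⟨j + 1, List.mem_range.mpr (by omega), rfl⟩)
  · rcases hk with hk | hk
    · exact (Finset.mem_insert.mp hk).elim Or.inl (Or.inr ∘ Or.inl)
    · exact Or.inr (Or.inr (Or.inl hk))

theorem exists_backEdge_of_mem_runChains (hT : IsRankedTree p r dfi) {L : List (V × V)}
    {vis : Finset V} {c : List V} (hc : c ∈ runChains p r L vis) {e : Sym2 V}
    (he : e ∈ chainEdges c) :
    ∃ q ∈ L, ∀ m, p^[m] q.2 = q.1 →
      e = s(q.1, q.2) ∨ ∃ i < m, e = s(p^[i] q.2, p^[i + 1] q.2) := by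
  induction L generalizing vis with
  | nil => exact absurd hc List.not_mem_nil
  | cons q rest ih =>
    obtain ⟨a, b⟩ := q
    rw [runChains_cons] at hc
    rcases List.mem_cons.mp hc with rfl | hc
    · exact ⟨(a, b), List.mem_cons_self, fun m hm => hT.mem_chainEdges_backEdgeChain hm he⟩
    · obtain ⟨q, hq, h⟩ := ih hc
      exact ⟨q, List.mem_cons_of_mem _ hq, h⟩

end IsRankedTree

def VisitInvariant {α : Type*} (p : α → α) (r : α) (dfi : α → ℕ) (L : List (α × α))
    (vis : Finset α) : Prop :=
  ∀ x ∈ vis, x ≠ r → p x ∈ vis ∨ ∀ q ∈ L, dfi x ≤ dfi q.1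

namespace VisitInvariant

section

variable {α : Type*} {p : α → α} {r : α} {dfi : α → ℕ}

theorem mem_of_iterate_mem (hT : IsRankedTree p r dfi) {L : List (α × α)} {vis : Finset α}
    (h : VisitInvariant p r dfi L vis) {q : α × α} (hq : q ∈ L) {u : α} {m : ℕ}
    (hm : p^[m] u = q.1) {x : α} (hx : x ∈ vis) {d : ℕ} (hxu : p^[d] x = u) : u ∈ vis := by
  induction d generalizing x with
  | zero => exact hxu ▸ hx
  | succ d ih =>
    by_cases hxr : x = r
    · rw [← hxu, hxr, hT.iterate_root]
      exact hxr ▸ hx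
    have hlt : dfi q.1 < dfi x := by
      rw [← hm, ← hxu, ← Function.iterate_add_apply]
      exact hT.dfi_iterate_succ_lt hxr (m + d)
    exact (h x hx hxr).elim (fun hpx => ih hpx hxu) fun hle => absurd (hle q hq) hlt.not_ge

end

variable {p : V → V} {r : V} {dfi : V → ℕ}

theorem cons (hT : IsRankedTree p r dfi) {a b : V} {rest : List (V × V)} {vis : Finset V}
    (hsort : ∀ q ∈ rest, dfi a ≤ dfi q.1) (h : VisitInvariant p r dfi ((a, b) :: rest) vis) :
    VisitInvariant p r dfi rest (vis ∪ (backEdgeChain p r vis a b).toFinset) := by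
  intro x hx hxr
  have old (hxv : x ∈ vis) :
      p x ∈ vis ∪ (backEdgeChain p r vis a b).toFinset ∨ ∀ q ∈ rest, dfi x ≤ dfi q.1 :=
    (h x hxv hxr).imp (Finset.mem_union_left _) fun hle q hq =>
      hle q (List.mem_cons_of_mem _ hq)
  rcases Finset.mem_union.mp hx with hxv | hx
  · exact old hxv
  rcases hT.mem_backEdgeChain (List.mem_toFinset.mp hx) with rfl | hxv | rfl | ⟨-, hpx⟩
  · exact Or.inr hsort
  · exact old hxv
  · exact absurd rfl hxr
  · exact Or.inl (Finset.mem_union_right _ (List.mem_toFinset.mpr hpx))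

theorem treeEdge_mem_chainEdges_backEdgeChain (hT : IsRankedTree p r dfi) {L : List (V × V)}
    {vis : Finset V} (h : VisitInvariant p r dfi L vis) {a b : V} (hab : (a, b) ∈ L) {u : V}
    (hu : u ≠ r) (huv : u ∉ vis) {i m : ℕ} (hi : p^[i] b = u) (hm : m ≠ 0)
    (hma : p^[m] u = a) : s(u, p u) ∈ chainEdges (backEdgeChain p r vis a b) := by
  rw [← hi, ← Function.iterate_succ_apply' p]
  refine hT.treeEdge_mem_chainEdges_backEdgeChain fun j hj => ?_
  have hju : p^[i - j] (p^[j] b) = u := by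
    rw [← Function.iterate_add_apply, Nat.sub_add_cancel hj, hi]
  refine ⟨fun hmem => ?_, fun hr => hu (by rw [← hju, hr, hT.iterate_root])⟩
  rcases Finset.mem_insert.mp hmem with ha | hv
  · refine hT.iterate_ne_self hu (n := i - j + m) (by omega) ?_
    rw [Function.iterate_add_apply, hma, ← ha, hju]
  · exact huv (h.mem_of_iterate_mem hT hab hma hv hju)

end VisitInvariant

theorem IsRankedTree.exists_treeEdge_mem_runChains {p : V → V} {r : V} {dfi : V → ℕ}
    (hT : IsRankedTree p r dfi) {u a b : V} (hu : u ≠ r) {i m : ℕ} (hi : p^[i] b = u)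
    (hm : m ≠ 0) (hma : p^[m] u = a) {L : List (V × V)} {vis : Finset V}
    (hsort : L.Pairwise fun q q' => dfi q.1 ≤ dfi q'.1) (h : VisitInvariant p r dfi L vis)
    (huv : u ∉ vis) (hab : (a, b) ∈ L) :
    ∃ c ∈ runChains p r L vis, s(u, p u) ∈ chainEdges c := by
  induction L generalizing vis with
  | nil => exact absurd hab List.not_mem_nil
  | cons q rest ih =>
    obtain ⟨a', b'⟩ := q
    rw [runChains_cons]
    rcases List.mem_cons.mp hab with heq | hab
    · obtain ⟨rfl, rfl⟩ := Prod.mk.inj heq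
      exact ⟨_, List.mem_cons_self,
        h.treeEdge_mem_chainEdges_backEdgeChain hT List.mem_cons_self hu huv hi hm hma⟩
    have hdu : dfi a' < dfi u := by
      obtain ⟨n, rfl⟩ := Nat.exists_eq_succ_of_ne_zero hm
      exact (List.rel_of_pairwise_cons hsort hab).trans_lt (hma ▸ hT.dfi_iterate_succ_lt hu n)
    by_cases huc : u ∈ backEdgeChain p r vis a' b'
    · rcases hT.mem_backEdgeChain huc with rfl | huv' | rfl | ⟨hc, -⟩
      · exact absurd hdu (lt_irrefl _)
      · exact absurd huv' huv
      · exact absurd rfl hu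
      · exact ⟨_, List.mem_cons_self, hc⟩
    · obtain ⟨c, hc, hec⟩ := ih (List.pairwise_cons.mp hsort).2
        (h.cons hT (List.pairwise_cons.mp hsort).1)
        (by simpa [huv] using huc) hab
      exact ⟨c, List.mem_cons_of_mem _ hc, hec⟩

namespace SchmidtDFS

variable {G : SimpleGraph V} (D : SchmidtDFS G)

omit [Fintype V] [DecidableEq V] in
theorem isRankedTree : IsRankedTree D.parent D.root D.dfi :=
  ⟨D.parent_root, D.dfi_parent⟩

theorem not_isBridge_of_mem_chainEdges {c : List V} (hc : c ∈ D.chains) {e : Sym2 V}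
    (he : e ∈ chainEdges c) : ¬ G.IsBridge e := by
  obtain ⟨⟨a, b⟩, hab, hcases⟩ := D.isRankedTree.exists_backEdge_of_mem_runChains hc he
  obtain ⟨hadj, hpb, m, -, hm⟩ := D.backEdges_spec _ hab
  rcases hcases m hm with rfl | ⟨i, hi, rfl⟩
  · exact fun hb => hb <| D.isRankedTree.reachable_deleteEdges_backEdge D.parent_adj hpb hm
  · exact fun hb => hb <|
      D.isRankedTree.reachable_deleteEdges_treeEdge D.parent_adj hadj hpb hm hi

omit [Fintype V] [DecidableEq V] in
theorem exists_backEdge_of_reachable_deleteEdges_treeEdge {v : V} (hv : v ≠ D.root)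
    (h : (G.deleteEdges {s(v, D.parent v)}).Reachable v (D.parent v)) :
    ∃ a b, (a, b) ∈ D.backEdges ∧ (∃ i, D.parent^[i] b = v) ∧
      ∃ m ≠ 0, D.parent^[m] v = a := by
  obtain ⟨w⟩ := h
  let S : Set V := {z | ∃ k, D.parent^[k] z = v}
  have hpv : D.parent v ∉ S := fun ⟨k, hk⟩ =>
    D.isRankedTree.iterate_ne_self hv k.succ_ne_zero hk
  obtain ⟨⟨⟨x, y⟩, hxy⟩, -, ⟨k, hk⟩, hy⟩ :=
    w.exists_boundary_dart S ⟨0, rfl⟩ hpv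
  replace hk : D.parent^[k] x = v := hk
  replace hy : y ∉ S := hy
  obtain ⟨hadj, hne⟩ := SimpleGraph.deleteEdges_adj.mp hxy
  have h₁ : x ≠ D.parent y := fun h =>
    hy ⟨k + 1, by rwa [Function.iterate_succ_apply, ← h]⟩
  have h₂ : y ≠ D.parent x := by
    intro h
    cases k with
    | zero => exact hne (by rw [h, show x = v from hk]; rfl)
    | succ k => exact hy ⟨k, by rwa [h, ← Function.iterate_succ_apply]⟩
  rcases D.backEdges_complete x y hadj h₁ h₂ with hb | hb
  · obtain ⟨-, -, m, -, hm⟩ := D.backEdges_spec _ hb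
    exact absurd ⟨k + m, by rw [Function.iterate_add_apply, hm, hk]⟩ hy
  · obtain ⟨-, -, m, -, hm⟩ := D.backEdges_spec _ hb
    replace hm : D.parent^[m] x = y := hm
    refine ⟨y, x, hb, ⟨k, hk⟩, m - k, ?_⟩
    rcases le_or_gt m k with hmk | hkm
    · refine absurd ⟨k - m, ?_⟩ hy
      rw [← hm, ← Function.iterate_add_apply, Nat.sub_add_cancel hmk, hk]
    · refine ⟨by omega, ?_⟩
      rw [← hk, ← Function.iterate_add_apply, Nat.sub_add_cancel hkm.le, hm]

theorem exists_chain_of_reachable_deleteEdges_treeEdge {v : V} (hv : G.Adj v (D.parent v))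
    (h : (G.deleteEdges {s(v, D.parent v)}).Reachable v (D.parent v)) :
    ∃ c ∈ D.chains, s(v, D.parent v) ∈ chainEdges c := by
  have hvr : v ≠ D.root := fun hvr => hv.ne (by rw [hvr, D.parent_root])
  obtain ⟨a, b, hab, ⟨i, hi⟩, m, hm, hma⟩ :=
    D.exists_backEdge_of_reachable_deleteEdges_treeEdge hvr h
  exact D.isRankedTree.exists_treeEdge_mem_runChains hvr hi hm hma D.backEdges_sorted
    (fun _ hx => absurd hx (Finset.notMem_empty _)) (Finset.notMem_empty _) hab

theorem exists_chain_of_not_isBridge {e : Sym2 V} (he : e ∈ G.edgeSet) (hb : ¬ G.IsBridge e) :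
    ∃ c ∈ D.chains, e ∈ chainEdges c := by
  induction e using Sym2.ind with | _ x y => ?_
  rw [SimpleGraph.mem_edgeSet] at he
  rw [SimpleGraph.isBridge_iff, not_not] at hb
  rcases eq_or_ne x (D.parent y) with rfl | hx
  · rw [Sym2.eq_swap] at hb ⊢
    exact D.exists_chain_of_reachable_deleteEdges_treeEdge he.symm hb.symm
  rcases eq_or_ne y (D.parent x) with rfl | hy
  · exact D.exists_chain_of_reachable_deleteEdges_treeEdge he hb
  rcases D.backEdges_complete x y he hx hy with h | h
  · exact exists_backEdge_mem_runChains _ _ h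
  · rw [Sym2.eq_swap]
    exact exists_backEdge_mem_runChains _ _ h

end SchmidtDFS

theorem bridge_iff_not_in_any_chain_general
    (G : SimpleGraph V) (D : SchmidtDFS G)
    (e : Sym2 V) (he : e ∈ G.edgeSet) :
    G.IsBridge e ↔ ∀ c ∈ D.chains, e ∉ chainEdges c := by
  refine ⟨fun hb c hc hec => D.not_isBridge_of_mem_chainEdges hc hec hb, fun h => ?_⟩
  by_contra hb
  obtain ⟨c, hc, hec⟩ := D.exists_chain_of_not_isBridge he hb
  exact h c hc hec

/-- Schmidt's criterion: an edge `e` of a connected graph `G` is a bridge if and only if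
`e` is not contained in any chain of a chain decomposition `D` of `G`. -/
theorem bridge_iff_not_in_any_chain
    (G : SimpleGraph V) (hG : G.Connected) (D : SchmidtDFS G)
    (e : Sym2 V) (he : e ∈ G.edgeSet) :
    G.IsBridge e ↔ ∀ c ∈ D.chains, e ∉ chainEdges c :=
  bridge_iff_not_in_any_chain_general G D e he
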